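/- arXiv:cs/0206012 — 2 statements merged into one kernel-verified Lean document; each statement's English description precedes it below -/
import Mathlib

section
/- Let X_1, X_2, … be finite nonnegative independent identically distributed real random variables whose common distribution is not concentrated on a single point, define S_n = ∑_{i=1}^n X_i, and fix c > 0. Then there exist constants δ > 0 and C > 0 such that for every ε ∈ (0,1) there exists a positive integer n ≤ C·(ln(1/ε) + 1) with the property that for every real t, if P(S_n < t) > ε then P(S_n < t − c) > δ·P(S_n < t). -/
/-!
Choose `a < b` with `r = P(X < a) > 0` and `q = P(X > b) > 0`, and `k` with `k (b - a) ≥ c`.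
If among `X_1, …, X_n` at least `J + 1` exceed `b`, replacing one of them by an independent
copy below `a` lowers the sum by at least `b - a`; by independence and double counting over the
coordinate replaced, `r P(N ≥ J + 1, S_n < t) ≤ 4 P(N ≥ J, S_n < t - (b - a))` as long as
`q n ≤ 4 (J + 1)`, where `N` counts the `X_i > b`. Iterating `k` times from `J ≈ q n / 4` gives
`r^k P(S_n < t) ≤ r^k P(N ≤ q n / 2) + 4^k P(S_n < t - c)`, and Hoeffding's inequality bounds
`P(N ≤ q n / 2) ≤ exp (-q² n / 2)`, which is below `ε / 2` once `n ≍ log (1 / ε) + 1`.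
-/

open MeasureTheory ProbabilityTheory Finset Set
open scoped ENNReal NNReal

lemma exists_lt_measure_Iio_pos_measure_Ioi_pos (ν : Measure ℝ) [IsProbabilityMeasure ν]
    (hν : ∀ x, ν {x} ≠ 1) : ∃ a b, a < b ∧ 0 < ν (Iio a) ∧ 0 < ν (Ioi b) := by
  obtain ⟨x, hx, y, hy, hxy⟩ : ∃ x ∈ ν.support, ∃ y ∈ ν.support, x < y := by
    obtain ⟨x, hx⟩ := ν.nonempty_support (IsProbabilityMeasure.ne_zero ν)
    by_contra! h
    have hsupp : {x}ᶜ ⊆ ν.supportᶜ := fun y hy hys =>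
      hy (le_antisymm (h x hx y hys) (h y hys x hx))
    exact hν x ((prob_compl_eq_zero_iff (measurableSet_singleton x)).1
      (measure_mono_null hsupp ν.measure_compl_support))
  refine ⟨x + (y - x) / 3, y - (y - x) / 3, by linarith, ?_, ?_⟩
  · exact (ν.mem_support_iff_forall x).1 hx _ (Iio_mem_nhds (by linarith))
  · exact (ν.mem_support_iff_forall y).1 hy _ (Ioi_mem_nhds (by linarith))

lemma exists_lt_measureReal_lt_pos_measureReal_gt_pos {Ω : Type*} [MeasurableSpace Ω]
    {μ : Measure Ω} [IsProbabilityMeasure μ] {Y : Ω → ℝ} (hY : Measurable Y)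
    (h : ∀ x, μ {ω | Y ω = x} ≠ 1) :
    ∃ a b, a < b ∧ 0 < μ.real {ω | Y ω < a} ∧ 0 < μ.real {ω | b < Y ω} := by
  have := Measure.isProbabilityMeasure_map (μ := μ) hY.aemeasurable
  obtain ⟨a, b, hab, ha, hb⟩ := exists_lt_measure_Iio_pos_measure_Ioi_pos (μ.map Y) fun x => by
    rw [Measure.map_apply hY (measurableSet_singleton x)]; exact h x
  rw [Measure.map_apply hY measurableSet_Iio] at ha
  rw [Measure.map_apply hY measurableSet_Ioi] at hb
  exact ⟨a, b, hab, ENNReal.toReal_pos ha.ne' (by finiteness),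
    ENNReal.toReal_pos hb.ne' (by finiteness)⟩

lemma natCast_mul_measure_le_sum_measure_inter {α ι : Type*} [MeasurableSpace α]
    (μ : Measure α) (s : Finset ι) {T : ι → Set α} [∀ i, DecidablePred (· ∈ T i)]
    (hT : ∀ i ∈ s, MeasurableSet (T i)) {A : Set α} {J : ℕ}
    (hJ : ∀ ω ∈ A, J ≤ #{i ∈ s | ω ∈ T i}) :
    J * μ A ≤ ∑ i ∈ s, μ (A ∩ T i) := by
  have hT' : ∀ i ∈ s, Measurable ((T i).indicator (1 : α → ℝ≥0∞)) :=
    fun i hi => measurable_one.indicator (hT i hi)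
  calc J * μ A = ∫⁻ _ in A, (J : ℝ≥0∞) ∂μ := (setLIntegral_const A _).symm
    _ ≤ ∫⁻ ω in A, ∑ i ∈ s, (T i).indicator 1 ω ∂μ := by
      refine setLIntegral_mono (Finset.measurable_sum _ hT') fun ω hω => ?_
      simp only [indicator_apply, Pi.one_apply, sum_boole]
      exact_mod_cast hJ ω hω
    _ = ∑ i ∈ s, μ (A ∩ T i) := by
      rw [lintegral_finsetSum _ hT']
      refine sum_congr rfl fun i hi => ?_
      rw [lintegral_indicator_one (hT i hi), Measure.restrict_apply (hT i hi), Set.inter_comm]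

lemma measurable_card_filter_lt {ι : Type*} [Fintype ι] (b : ℝ) :
    Measurable fun v : ι → ℝ => #{j | b < v j} := by
  simp_rw [card_filter]
  exact Finset.measurable_sum _ fun j _ => Measurable.ite
    (measurableSet_lt measurable_const (measurable_pi_apply j)) measurable_const measurable_const

lemma card_filter_eq_card_filter_erase_add {ι : Type*} [DecidableEq ι] {s : Finset ι} {i : ι}
    (hi : i ∈ s) (p : ι → Prop) [DecidablePred p] :
    #{j ∈ s | p j} = #{j : s.erase i | p j} + if p i then 1 else 0 := by
  rw [card_filter, card_filter, sum_coe_sort (s.erase i) (fun j => if p j then 1 else 0),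
    add_comm]
  exact (add_sum_erase s (fun j => if p j then 1 else 0) hi).symm

lemma ProbabilityTheory.IndepFun.measure_mul_le_measure_mul {Ω α β : Type*}
    [MeasurableSpace Ω] [MeasurableSpace α] [MeasurableSpace β] {μ : Measure Ω}
    {Y : Ω → α} {Z : Ω → β} (h : IndepFun Y Z μ) {A B : Set α} {G : Set β}
    (hA : MeasurableSet A) (hB : MeasurableSet B) (hG : MeasurableSet G) {E F : Set Ω}
    (hE : E ⊆ Y ⁻¹' B ∩ Z ⁻¹' G) (hF : Y ⁻¹' A ∩ Z ⁻¹' G ⊆ F) :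
    μ (Y ⁻¹' A) * μ E ≤ μ (Y ⁻¹' B) * μ F :=
  calc μ (Y ⁻¹' A) * μ E ≤ μ (Y ⁻¹' A) * μ (Y ⁻¹' B ∩ Z ⁻¹' G) := by gcongr
    _ = μ (Y ⁻¹' B) * μ (Y ⁻¹' A ∩ Z ⁻¹' G) := by
      rw [h.measure_inter_preimage_eq_mul _ _ hB hG, h.measure_inter_preimage_eq_mul _ _ hA hG]
      ring
    _ ≤ μ (Y ⁻¹' B) * μ F := by gcongr

section IndependentSummands

variable {Ω ι : Type*} [MeasurableSpace Ω] {μ : Measure Ω} {X : ι → Ω → ℝ}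

lemma hasSubgaussianMGF_sub_indicator_Ioi [IsProbabilityMeasure μ] {Y : Ω → ℝ}
    (hY : Measurable Y) {b q : ℝ} (hq : μ.real {ω | b < Y ω} = q) :
    HasSubgaussianMGF (fun ω => q - (Ioi b).indicator 1 (Y ω)) (1 / 4) μ := by
  have hcomp : (fun ω => (Ioi b).indicator (1 : ℝ → ℝ) (Y ω)) = (Y ⁻¹' Ioi b).indicator 1 := rfl
  have hint : Integrable (fun ω => (Ioi b).indicator (1 : ℝ → ℝ) (Y ω)) μ := by
    rw [hcomp]; exact (integrable_const 1).indicator (hY measurableSet_Ioi)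
  have hmem : ∀ ω, q - (Ioi b).indicator 1 (Y ω) ∈ Icc (q - 1) q := fun ω => by
    by_cases h : Y ω ∈ Ioi b <;> simp [h]
  have hmean : μ[fun ω => q - (Ioi b).indicator 1 (Y ω)] = 0 := by
    rw [integral_sub (integrable_const q) hint, hcomp,
      integral_indicator_one (hY measurableSet_Ioi), integral_const, ← hq]
    simp only [probReal_univ, smul_eq_mul, one_mul]
    exact sub_self _
  have h := hasSubgaussianMGF_of_mem_Icc_of_integral_eq_zero
    ((measurable_const.sub (measurable_one.indicator measurableSet_Ioi)).comp hY).aemeasurable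
    (ae_of_all _ hmem) hmean
  rwa [sub_sub_cancel, nnnorm_one, show ((1 : ℝ≥0) / 2) ^ 2 = 1 / 4 by norm_num] at h

/-- Hoeffding's inequality for the centred indicators `q - 1{b < X i}`. -/
lemma measureReal_card_filter_le_le_exp [IsProbabilityMeasure μ] (hind : iIndepFun X μ)
    (hmeas : ∀ i, Measurable (X i)) (s : Finset ι) {b q : ℝ}
    (hq : ∀ i ∈ s, μ.real {ω | b < X i ω} = q) :
    μ.real {ω | (#{i ∈ s | b < X i ω} : ℝ) ≤ q * #s / 2} ≤ Real.exp (-q ^ 2 * #s / 2) := by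
  have hε : 0 ≤ q * #s / 2 := by
    rcases s.eq_empty_or_nonempty with rfl | ⟨i, hi⟩
    · simp
    · have := hq i hi ▸ measureReal_nonneg
      positivity
  have hset : {ω | (#{i ∈ s | b < X i ω} : ℝ) ≤ q * #s / 2}
      = {ω | q * #s / 2 ≤ ∑ i ∈ s, (q - (Ioi b).indicator 1 (X i ω))} := by
    ext ω
    simp only [mem_ofPred_eq, sum_sub_distrib, sum_const, nsmul_eq_mul, indicator_apply,
      Set.mem_Ioi, Pi.one_apply, natCast_card_filter]
    constructor <;> intro h <;> linarith
  rw [hset]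
  refine (HasSubgaussianMGF.measure_sum_ge_le_of_iIndepFun
    (hind.comp (fun _ x => q - (Ioi b).indicator 1 x)
      fun _ => measurable_const.sub (measurable_one.indicator measurableSet_Ioi))
    (fun i hi => hasSubgaussianMGF_sub_indicator_Ioi (hmeas i) (hq i hi)) hε).trans_eq ?_
  rcases s.eq_empty_or_nonempty with rfl | hs
  · simp
  · have : (0 : ℝ) < #s := by exact_mod_cast hs.card_pos
    rw [sum_const, nsmul_eq_mul]
    push_cast
    congr 1
    field_simp
    ring

def largeCountSumLt (X : ι → Ω → ℝ) (s : Finset ι) (b : ℝ) (J : ℕ) (t : ℝ) : Set Ω :=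
  {ω | J ≤ #{i ∈ s | b < X i ω} ∧ ∑ i ∈ s, X i ω < t}

variable [DecidableEq ι] {s : Finset ι} {a b : ℝ}

/-- Replacing `X i > b` by an independent value `< a` moves an outcome from
`largeCountSumLt X s b (J + 1) t` to `largeCountSumLt X s b J (t - (b - a))`. -/
lemma measure_lt_mul_measure_largeCountSumLt_inter_le (hind : iIndepFun X μ)
    (hmeas : ∀ i, Measurable (X i)) {i : ι} (hi : i ∈ s) (a b : ℝ) (J : ℕ) (t : ℝ) :
    μ {ω | X i ω < a} * μ (largeCountSumLt X s b (J + 1) t ∩ {ω | b < X i ω})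
      ≤ μ {ω | b < X i ω} * μ (largeCountSumLt X s b J (t - (b - a)) ∩ {ω | X i ω < a}) := by
  have hZ : IndepFun (X i) (fun ω (j : s.erase i) => X j ω) μ :=
    (hind.indepFun_finset {i} (s.erase i) (by simp) hmeas).comp
      (measurable_pi_apply (⟨i, mem_singleton_self i⟩ : ({i} : Finset ι))) measurable_id
  have hsum : ∀ ω, ∑ j ∈ s, X j ω = X i ω + ∑ j : s.erase i, X j ω := fun ω => by
    rw [sum_coe_sort (s.erase i) (X · ω), add_sum_erase s (X · ω) hi]
  refine hZ.measure_mul_le_measure_mul (A := Iio a) (B := Ioi b)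
    (G := {v | J ≤ #{j | b < v j} ∧ ∑ j, v j < t - b}) measurableSet_Iio measurableSet_Ioi
    ((measurableSet_le measurable_const (measurable_card_filter_lt b)).inter
      (measurableSet_lt (Finset.measurable_sum _ fun j _ => measurable_pi_apply j)
        measurable_const)) ?_ ?_
  · rintro ω ⟨⟨hcount, hlt⟩, hbig : b < X i ω⟩
    have hc := card_filter_eq_card_filter_erase_add hi (b < X · ω)
    simp only [if_pos hbig] at hc
    refine ⟨hbig, ?_, ?_⟩
    · show J ≤ #{j : s.erase i | b < X j ω}
      omega
    · show ∑ j : s.erase i, X j ω < t - b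
      linarith [hsum ω]
  · rintro ω ⟨hsmall : X i ω < a, hcount : J ≤ #{j : s.erase i | b < X j ω},
      hlt : ∑ j : s.erase i, X j ω < t - b⟩
    have hc := card_filter_eq_card_filter_erase_add hi (b < X · ω)
    exact ⟨⟨by omega, by linarith [hsum ω]⟩, hsmall⟩

variable {r q : ℝ≥0∞}

lemma card_mul_measure_largeCountSumLt_le (hind : iIndepFun X μ)
    (hmeas : ∀ i, Measurable (X i)) (hr : ∀ i ∈ s, μ {ω | X i ω < a} = r)
    (hq : ∀ i ∈ s, μ {ω | b < X i ω} = q) (J : ℕ) (t : ℝ) :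
    (J + 1) * r * μ (largeCountSumLt X s b (J + 1) t)
      ≤ #s * q * μ (largeCountSumLt X s b J (t - (b - a))) := by
  set E := largeCountSumLt X s b (J + 1) t
  set E' := largeCountSumLt X s b J (t - (b - a))
  calc (J + 1) * r * μ E = r * ((J + 1 : ℕ) * μ E) := by push_cast; ring
    _ ≤ r * ∑ i ∈ s, μ (E ∩ {ω | b < X i ω}) := by
      gcongr
      exact natCast_mul_measure_le_sum_measure_inter μ s
        (fun i _ => measurableSet_lt measurable_const (hmeas i)) fun ω hω => hω.1
    _ = ∑ i ∈ s, μ {ω | X i ω < a} * μ (E ∩ {ω | b < X i ω}) := by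
      rw [mul_sum]; exact sum_congr rfl fun i hi => by rw [hr i hi]
    _ ≤ ∑ i ∈ s, μ {ω | b < X i ω} * μ (E' ∩ {ω | X i ω < a}) :=
      sum_le_sum fun i hi =>
        measure_lt_mul_measure_largeCountSumLt_inter_le hind hmeas hi a b J t
    _ = q * ∑ i ∈ s, μ (E' ∩ {ω | X i ω < a}) := by
      rw [mul_sum]; exact sum_congr rfl fun i hi => by rw [hq i hi]
    _ ≤ q * (#s * μ E') := by
      gcongr
      rw [← nsmul_eq_mul]
      exact sum_le_card_nsmul _ _ _ fun i _ => measure_mono inter_subset_left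
    _ = #s * q * μ E' := by ring

lemma pow_mul_measure_largeCountSumLt_le (hind : iIndepFun X μ)
    (hmeas : ∀ i, Measurable (X i)) (hr : ∀ i ∈ s, μ {ω | X i ω < a} = r)
    (hq : ∀ i ∈ s, μ {ω | b < X i ω} = q) {J : ℕ} (hJ : #s * q ≤ 4 * (J + 1)) (k : ℕ)
    (t : ℝ) :
    r ^ k * μ (largeCountSumLt X s b (J + k) t)
      ≤ 4 ^ k * μ (largeCountSumLt X s b J (t - k * (b - a))) := by
  induction k generalizing t with
  | zero => simp
  | succ k ih =>
    have hstep : r * μ (largeCountSumLt X s b (J + k + 1) t)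
        ≤ 4 * μ (largeCountSumLt X s b (J + k) (t - (b - a))) := by
      have hpos : ((J + k : ℕ) : ℝ≥0∞) + 1 ≠ 0 := by positivity
      refine (ENNReal.mul_le_mul_iff_right hpos (by finiteness)).1 ?_
      calc _ = ((J + k : ℕ) + 1) * r * μ (largeCountSumLt X s b (J + k + 1) t) := by ring
        _ ≤ #s * q * μ (largeCountSumLt X s b (J + k) (t - (b - a))) :=
          card_mul_measure_largeCountSumLt_le hind hmeas hr hq (J + k) t
        _ ≤ 4 * ((J + k : ℕ) + 1) * μ (largeCountSumLt X s b (J + k) (t - (b - a))) := by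
          gcongr ?_ * _
          exact hJ.trans (by gcongr; exact_mod_cast Nat.le_add_right J k)
        _ = _ := by ring
    calc r ^ (k + 1) * μ (largeCountSumLt X s b (J + (k + 1)) t)
        = r ^ k * (r * μ (largeCountSumLt X s b (J + k + 1) t)) := by ring_nf
      _ ≤ r ^ k * (4 * μ (largeCountSumLt X s b (J + k) (t - (b - a)))) := by gcongr
      _ = 4 * (r ^ k * μ (largeCountSumLt X s b (J + k) (t - (b - a)))) := by ring
      _ ≤ 4 * (4 ^ k * μ (largeCountSumLt X s b J (t - (b - a) - k * (b - a)))) := by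
        gcongr 4 * ?_; exact ih _
      _ = 4 ^ (k + 1) * μ (largeCountSumLt X s b J (t - (k + 1 : ℕ) * (b - a))) := by
        rw [show t - (b - a) - k * (b - a) = t - (k + 1 : ℕ) * (b - a) by push_cast; ring]
        ring

lemma pow_mul_measureReal_sum_lt_le [IsProbabilityMeasure μ] (hind : iIndepFun X μ)
    (hmeas : ∀ i, Measurable (X i)) {r q : ℝ} (hr : ∀ i ∈ s, μ.real {ω | X i ω < a} = r)
    (hq : ∀ i ∈ s, μ.real {ω | b < X i ω} = q) (hr0 : 0 ≤ r) {k : ℕ} (hk : 4 * k ≤ q * #s)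
    (t : ℝ) :
    r ^ k * μ.real {ω | ∑ i ∈ s, X i ω < t}
      ≤ r ^ k * Real.exp (-q ^ 2 * #s / 2)
        + 4 ^ k * μ.real {ω | ∑ i ∈ s, X i ω < t - k * (b - a)} := by
  set J := ⌊q * #s / 4⌋₊
  have hJk : (J : ℝ) + k ≤ q * #s / 2 := by
    have := Nat.floor_le (a := q * #s / 4) (by linarith [(Nat.cast_nonneg k : (0 : ℝ) ≤ k)])
    linarith
  have hJ : (#s : ℝ≥0∞) * ENNReal.ofReal q ≤ 4 * (J + 1) := by
    rw [← ENNReal.ofReal_natCast, ← ENNReal.ofReal_mul (Nat.cast_nonneg _)]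
    refine ENNReal.ofReal_le_of_le_toReal ?_
    simpa [ENNReal.toReal_add] using
      (by linarith [Nat.lt_floor_add_one (q * #s / 4)] : (#s : ℝ) * q ≤ 4 * (J + 1))
  have hchain : r ^ k * μ.real (largeCountSumLt X s b (J + k) t)
      ≤ 4 ^ k * μ.real {ω | ∑ i ∈ s, X i ω < t - k * (b - a)} := by
    have := ENNReal.toReal_mono (by finiteness) <|
      pow_mul_measure_largeCountSumLt_le (a := a) (b := b) (r := ENNReal.ofReal r) hind hmeas
        (fun i hi => by rw [← hr i hi, ofReal_measureReal])
        (fun i hi => by rw [← hq i hi, ofReal_measureReal]) hJ k t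
    simp only [ENNReal.toReal_mul, ENNReal.toReal_pow, ENNReal.toReal_ofReal hr0,
      ENNReal.toReal_ofNat] at this
    exact this.trans (by gcongr; exact measureReal_mono fun ω hω => hω.2)
  have hcover : {ω | ∑ i ∈ s, X i ω < t} ⊆
      {ω | (#{i ∈ s | b < X i ω} : ℝ) ≤ q * #s / 2} ∪ largeCountSumLt X s b (J + k) t := by
    intro ω hω
    by_cases h : (#{i ∈ s | b < X i ω} : ℝ) ≤ q * #s / 2
    · exact Or.inl h
    · refine Or.inr ⟨?_, hω⟩
      exact_mod_cast (show ((J + k : ℕ) : ℝ) ≤ #{i ∈ s | b < X i ω} by push_cast; linarith)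
  have hsplit := (measureReal_mono (μ := μ) hcover).trans (measureReal_union_le _ _)
  have htail := measureReal_card_filter_le_le_exp hind hmeas s hq
  have hrk : 0 ≤ r ^ k := pow_nonneg hr0 k
  nlinarith [mul_le_mul_of_nonneg_left hsplit hrk, mul_le_mul_of_nonneg_left htail hrk]

end IndependentSummands

lemma exists_nat_le_mul_log_add_one {q : ℝ} (hq0 : 0 < q) (hq1 : q ≤ 1) (k : ℕ) {ε : ℝ}
    (hε0 : 0 < ε) (hε1 : ε < 1) :
    ∃ n : ℕ, 0 < n ∧ (n : ℝ) ≤ (4 * k + 3) / q ^ 2 * (Real.log (1 / ε) + 1) ∧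
      4 * k ≤ q * n ∧ Real.exp (-q ^ 2 * n / 2) ≤ ε / 2 := by
  set L := Real.log (1 / ε)
  have hL : 0 < L := Real.log_pos (by rw [lt_div_iff₀ hε0]; linarith)
  have hq2 : 0 < q ^ 2 := by positivity
  set x := (2 * (L + 1) + 4 * k) / q ^ 2
  have hx : 0 < x := by positivity
  have hqx : q ^ 2 * x = 2 * (L + 1) + 4 * k := mul_div_cancel₀ _ hq2.ne'
  have hn := Nat.le_ceil x
  refine ⟨⌈x⌉₊, Nat.ceil_pos.2 hx, ?_, by nlinarith, ?_⟩
  · have h1 : (⌈x⌉₊ : ℝ) < x + 1 := Nat.ceil_lt_add_one hx.le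
    have h2 : x + 1 ≤ (4 * k + 3) / q ^ 2 * (L + 1) := by
      rw [div_mul_eq_mul_div, le_div_iff₀ hq2]
      nlinarith
    linarith
  · have hexpL : Real.exp (-L) = ε := by
      rw [show L = -Real.log ε by simp [L], neg_neg, Real.exp_log hε0]
    have hexp1 : Real.exp (-1) ≤ 1 / 2 := by
      rw [Real.exp_neg, inv_le_comm₀ (Real.exp_pos 1) (by norm_num)]
      linarith [Real.add_one_le_exp 1]
    calc Real.exp (-q ^ 2 * ⌈x⌉₊ / 2) ≤ Real.exp (-L + -1) := by
          rw [Real.exp_le_exp]; nlinarith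
      _ ≤ ε / 2 := by
        rw [Real.exp_add, hexpL]
        nlinarith

theorem gap_combined_general {Ω : Type*} [MeasurableSpace Ω]
    (μ : Measure Ω) [IsProbabilityMeasure μ] (X : ℕ → Ω → ℝ)
    (hXmeas : ∀ i, Measurable (X i))
    (hind : iIndepFun X μ)
    (hid : ∀ i, Measure.map (X i) μ = Measure.map (X 0) μ)
    (hnondeg : ∀ a : ℝ, μ {ω | X 0 ω = a} ≠ 1)
    (c : ℝ) :
    ∃ δ : ℝ, 0 < δ ∧ ∃ C : ℝ, 0 < C ∧ ∀ ε : ℝ, 0 < ε → ε < 1 →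
      ∃ n : ℕ, 0 < n ∧ (n : ℝ) ≤ C * (Real.log (1 / ε) + 1) ∧
        ∀ t : ℝ, ENNReal.ofReal ε < μ {ω | (∑ i ∈ Finset.range n, X i ω) < t} →
          δ * (μ {ω | (∑ i ∈ Finset.range n, X i ω) < t}).toReal <
            (μ {ω | (∑ i ∈ Finset.range n, X i ω) < t - c}).toReal := by
  obtain ⟨a, b, hab, hr, hq⟩ :=
    exists_lt_measureReal_lt_pos_measureReal_gt_pos (hXmeas 0) hnondeg
  have hlaw : ∀ i {S : Set ℝ}, MeasurableSet S → μ.real (X i ⁻¹' S) = μ.real (X 0 ⁻¹' S) :=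
    fun i S hS => by
      rw [← map_measureReal_apply (hXmeas i) hS, hid i, map_measureReal_apply (hXmeas 0) hS]
  set k := ⌈c / (b - a)⌉₊
  have hck : c ≤ k * (b - a) := (div_le_iff₀ (sub_pos.2 hab)).1 (Nat.le_ceil _)
  refine ⟨μ.real {ω | X 0 ω < a} ^ k / (2 * 4 ^ k), by positivity,
    (4 * k + 3) / μ.real {ω | b < X 0 ω} ^ 2, by positivity, fun ε hε0 hε1 => ?_⟩
  obtain ⟨n, hn0, hnC, hkn, hexp⟩ :=
    exists_nat_le_mul_log_add_one hq measureReal_le_one k hε0 hε1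
  refine ⟨n, hn0, hnC, fun t ht => ?_⟩
  have hε := (ENNReal.ofReal_lt_iff_lt_toReal hε0.le (by finiteness)).1 ht
  have hkey := pow_mul_measureReal_sum_lt_le hind hXmeas (s := range n)
    (r := μ.real {ω | X 0 ω < a}) (q := μ.real {ω | b < X 0 ω})
    (fun i _ => hlaw i measurableSet_Iio) (fun i _ => hlaw i measurableSet_Ioi) hr.le
    (by rwa [card_range]) t
  rw [card_range] at hkey
  have hmono : μ.real {ω | ∑ i ∈ range n, X i ω < t - k * (b - a)}
      ≤ μ.real {ω | ∑ i ∈ range n, X i ω < t - c} :=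
    measureReal_mono (ofPred_subset_ofPred.2 fun ω hω => by linarith)
  simp only [← measureReal_def] at hε ⊢
  rw [div_mul_eq_mul_div, div_lt_iff₀ (by positivity)]
  linarith [mul_lt_mul_of_pos_left hε (pow_pos hr k),
    mul_le_mul_of_nonneg_left hexp (pow_pos hr k).le,
    mul_le_mul_of_nonneg_left hmono (by positivity : (0 : ℝ) ≤ 4 ^ k)]

/-- Let `X 0, X 1, …` be finite nonnegative i.i.d. real random variables
whose common distribution is not concentrated on a point, `S n = ∑_{i<n} X i`, and fix
`c > 0`.  Then there are constants `δ > 0` and `C > 0` such that for every `ε ∈ (0,1)`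
there is `n ≥ 1` with `n ≤ C (log (1/ε) + 1)` such that for every real `t`, if
`P(S n < t) > ε` then `P(S n < t - c) > δ P(S n < t)`. -/
theorem gap_combined {Ω : Type*} [MeasurableSpace Ω]
    (μ : Measure Ω) [IsProbabilityMeasure μ] (X : ℕ → Ω → ℝ)
    (hXmeas : ∀ i, Measurable (X i))
    (hXnonneg : ∀ i ω, 0 ≤ X i ω)
    (hind : iIndepFun X μ)
    (hid : ∀ i, Measure.map (X i) μ = Measure.map (X 0) μ)
    (hnondeg : ∀ a : ℝ, μ {ω | X 0 ω = a} ≠ 1)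
    (c : ℝ) (hc : 0 < c) :
    ∃ δ : ℝ, 0 < δ ∧ ∃ C : ℝ, 0 < C ∧ ∀ ε : ℝ, 0 < ε → ε < 1 →
      ∃ n : ℕ, 0 < n ∧ (n : ℝ) ≤ C * (Real.log (1 / ε) + 1) ∧
        ∀ t : ℝ, ENNReal.ofReal ε < μ {ω | (∑ i ∈ Finset.range n, X i ω) < t} →
          δ * (μ {ω | (∑ i ∈ Finset.range n, X i ω) < t}).toReal <
            (μ {ω | (∑ i ∈ Finset.range n, X i ω) < t - c}).toReal :=
  gap_combined_general μ X hXmeas hind hid hnondeg c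
end

section
/- There exist a noise distribution F and adversary delays such that the lean-consensus algorithm requires expected Ω(log n) rounds in the noisy scheduling model, even without failures. Specifically, take all Δ_{ij} = 0 for j ≥ 1, starting offsets Δ_{i0} that are distinct values in the open interval (0,1), and let every operation's duration be 1 or 2 time units with probability 1/2 each, independently. Then there is a universal constant κ > 0 such that for all sufficiently large even n, when n/2 processes start with input 0 and n/2 with input 1, the expected round number at which the first process decides is at least κ·ln n. -/
/-- Local state of a process executing the lean-consensus algorithm.  `pc ∈ {0,1,2,3}`
is the index of the next operation within the current round: `0` = read `a_0[r]`,
`1` = read `a_1[r]`, `2` = write `1` to `a_p[r]`, `3` = read `a_{1-p}[r-1]` (deciding `p`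
if it is `0`).  `pref` is the current preference, `round` the current round number,
`firstRead` the value read from `a_0[r]` at `pc = 0`, and `decided` records the decision
value once the process has decided (after which it takes no further steps). -/
structure ProcState where
  pc : ℕ
  pref : Bool
  round : ℕ
  firstRead : Bool
  decided : Option Bool
  deriving DecidableEq

/-- A global configuration of the lean-consensus algorithm: the contents of the two
register arrays (`reg b r` is the register `a_b[r]`, where bit `false` stands for `0` and
`true` for `1`) together with the local state of each of the `N` processes. -/
structure Config (N : ℕ) where
  reg : Bool → ℕ → Bool
  proc : Fin N → ProcState

/-- The initial configuration: `a_0[0] = a_1[0] = 1`, all other registers `0`, and every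
process at the first operation of round `1`, preferring its input bit. -/
def initConfig (N : ℕ) (input : Fin N → Bool) : Config N where
  reg := fun _ r => r == 0
  proc := fun i => ⟨0, input i, 1, false, none⟩

/-- One atomic operation of a single process of the lean-consensus algorithm: given the
current register contents and the process's local state, return its new local state
together with `some (b, r)` if the operation writes `1` to register `a_b[r]` (and `none`
for a read).  A decided process does nothing. -/
def procStep (reg : Bool → ℕ → Bool) (s : ProcState) : ProcState × Option (Bool × ℕ) :=
  if s.decided ≠ none then (s, none)
  else if s.pc = 0 then ({ s with pc := 1, firstRead := reg false s.round }, none)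
  else if s.pc = 1 then
    let v0 := s.firstRead
    let v1 := reg true s.round
    let p := if v0 = true ∧ v1 = false then false
             else if v1 = true ∧ v0 = false then true
             else s.pref
    ({ s with pc := 2, pref := p }, none)
  else if s.pc = 2 then ({ s with pc := 3 }, some (s.pref, s.round))
  else if reg (!s.pref) (s.round - 1) = false then
    ({ s with decided := some s.pref }, none)
  else ({ s with pc := 0, round := s.round + 1 }, none)

/-- The global transition: process `i` performs its next atomic operation (interleaving
semantics). -/
def step {N : ℕ} (c : Config N) (i : Fin N) : Config N :=
  let r := procStep c.reg (c.proc i)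
  { reg := fun b k => match r.2 with
      | some w => if b = w.1 ∧ k = w.2 then true else c.reg b k
      | none => c.reg b k
    proc := Function.update c.proc i r.1 }

/-- `run input sched t` is the configuration reached after the first `t` steps of the
execution of lean-consensus from inputs `input` in which the process `sched s` performs
the `s`-th atomic operation. -/
def run {N : ℕ} (input : Fin N → Bool) (sched : ℕ → Fin N) : ℕ → Config N
  | 0 => initConfig N input
  | t + 1 => step (run input sched t) (sched t)

open MeasureTheory ProbabilityTheory
open scoped ENNReal

/-- `opCountT sched i t` is the number of operations process `i` performs during the
first `t` steps of the (total) schedule `sched`. -/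
def opCountT {N : ℕ} (sched : ℕ → Fin N) (i : Fin N) (t : ℕ) : ℕ :=
  ((Finset.range t).filter fun s => sched s = i).card

/-- `ConsistentTotal T sched` says that the schedule `sched` is the interleaving of the
processes' operations in increasing order of their (finite) occurrence times, where
`T i j` is the time at which process `i`'s `j`-th operation occurs: every scheduled
operation occurs no later than every other pending operation, and every operation is
eventually performed. -/
def ConsistentTotal {N : ℕ} (T : Fin N → ℕ → ℝ) (sched : ℕ → Fin N) : Prop :=
  (∀ t i', T (sched t) (opCountT sched (sched t) t + 1) ≤
      T i' (opCountT sched i' t + 1)) ∧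
  (∀ i j, ∃ t, sched t = i ∧ opCountT sched i t = j)

/-- `firstDecisionRound input sched` is the round number (as an element of `ℝ≥0∞`, `⊤`
if no process ever decides) at which the first process to decide does so, in the
execution of lean-consensus from inputs `input` under schedule `sched`. -/
noncomputable def firstDecisionRound {N : ℕ} (input : Fin N → Bool)
    (sched : ℕ → Fin N) : ℝ≥0∞ :=
  sInf {x : ℝ≥0∞ | ∃ (k t : ℕ) (i : Fin N), x = k ∧
    ((run input sched t).proc i).decided = none ∧
    ((run input sched (t + 1)).proc i).decided ≠ none ∧
    ((run input sched t).proc i).round = k}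

open MeasureTheory ProbabilityTheory
open scoped ENNReal

/-!
With offsets in `(0, 1)` and durations at least `1`, the `j`-th operation of every process
occurs after time `j`, and it occurs at `Δ0 + j < j + 1` as long as all earlier durations of
that process were `1`. Two processes with opposite inputs whose first `4R` durations are all `1`
therefore run in lockstep through `R` rounds: each reads both registers of round `r` before
time `4r - 1`, when no write of round `r` can have happened yet, so it keeps its preference;
and each reads `a_{1-p}[r-1]` after time `4r`, when the other has already written it (before
time `4r - 4`), so it does not decide. For the same reason no other process can decide before
round `R` either.

Splitting the processes into `n / 2` disjoint pairs with opposite inputs, each pair is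
synchronized for `R` rounds with probability `q = 2^{-8R}`, pairwise independently, so by a
second-order Bonferroni bound some pair is synchronized with probability at least `n q / 4`.
Taking `2^{8R}` between `n` and `256 n` makes this a constant, so the expected first decision
round is at least a constant times `R`, which is of order `log n`.
-/

namespace LeanConsensus

open Finset

variable {N : ℕ} {input : Fin N → Bool} {sched : ℕ → Fin N}

lemma procStep_snd_eq_some_iff {reg : Bool → ℕ → Bool} {s : ProcState} {w : Bool × ℕ} :
    (procStep reg s).2 = some w ↔ s.decided = none ∧ s.pc = 2 ∧ w = (s.pref, s.round) := by
  unfold procStep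
  split_ifs <;> grind

lemma procStep_decided_ne_none {reg : Bool → ℕ → Bool} {s : ProcState}
    (hlive : s.decided = none) (hdec : (procStep reg s).1.decided ≠ none) :
    s.pc ≠ 0 ∧ s.pc ≠ 1 ∧ s.pc ≠ 2 ∧ reg (!s.pref) (s.round - 1) = false := by
  unfold procStep at hdec
  split_ifs at hdec <;> simp_all

lemma step_reg (c : Config N) (j : Fin N) (b : Bool) (k : ℕ) :
    (step c j).reg b k = (c.reg b k || decide ((procStep c.reg (c.proc j)).2 = some (b, k))) := by
  simp only [step]
  cases (procStep c.reg (c.proc j)).2 <;> grind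

lemma opCountT_succ (i : Fin N) (t : ℕ) :
    opCountT sched i (t + 1) = opCountT sched i t + if sched t = i then 1 else 0 := by
  unfold opCountT
  rw [range_add_one, filter_insert]
  split_ifs <;> simp [card_insert_of_notMem]

lemma opCountT_mono (i : Fin N) : Monotone (opCountT sched i) := fun _ _ h =>
  card_le_card (filter_subset_filter _ (range_subset_range.2 h))

lemma run_proc_of_ne {i : Fin N} {t : ℕ} (h : sched t ≠ i) :
    (run input sched (t + 1)).proc i = (run input sched t).proc i :=
  Function.update_of_ne (Ne.symm h) _ _

lemma run_proc_self (t : ℕ) :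
    (run input sched (t + 1)).proc (sched t) =
      (procStep (run input sched t).reg ((run input sched t).proc (sched t))).1 :=
  Function.update_self _ _ _

lemma run_proc_eq_of_opCountT_eq (i : Fin N) {t t' : ℕ}
    (h : opCountT sched i t = opCountT sched i t') :
    (run input sched t).proc i = (run input sched t').proc i := by
  wlog hle : t ≤ t' generalizing t t'
  · exact (this h.symm (le_of_not_ge hle)).symm
  induction t', hle using Nat.le_induction with
  | base => rfl
  | succ t' ht ih =>
    have hcount := opCountT_succ (sched := sched) i t'
    have hmono := opCountT_mono (sched := sched) i ht
    have hs : sched t' ≠ i := fun hs => by simp [hs] at hcount; omega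
    rw [run_proc_of_ne hs]
    exact ih (by simp [hs] at hcount; omega)

lemma run_reg_mono {b : Bool} {k t t' : ℕ} (h : t ≤ t')
    (hreg : (run input sched t).reg b k = true) : (run input sched t').reg b k = true := by
  induction t', h using Nat.le_induction with
  | base => exact hreg
  | succ t' _ ih => simp [run, step_reg, ih]

lemma run_reg_zero (b : Bool) (t : ℕ) : (run input sched t).reg b 0 = true :=
  run_reg_mono (Nat.zero_le t) rfl

lemma run_reg_succ_of_pc_eq_two {i : Fin N} {t : ℕ} (hi : sched t = i)
    (hlive : ((run input sched t).proc i).decided = none)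
    (hpc : ((run input sched t).proc i).pc = 2) :
    (run input sched (t + 1)).reg ((run input sched t).proc i).pref
      ((run input sched t).proc i).round = true := by
  subst hi
  simp [run, step_reg, procStep_snd_eq_some_iff, hlive, hpc]

lemma run_round_pc (i : Fin N) (t : ℕ) (hlive : ((run input sched t).proc i).decided = none) :
    4 * ((run input sched t).proc i).round + ((run input sched t).proc i).pc =
      opCountT sched i t + 4 ∧ ((run input sched t).proc i).pc ≤ 3 := by
  induction t with
  | zero => simp [run, initConfig, opCountT]
  | succ t ih =>
    by_cases hs : sched t = i
    · subst hs
      rw [run_proc_self] at hlive ⊢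
      have hlive' : ((run input sched t).proc (sched t)).decided = none := by
        by_contra h
        simp [procStep, h] at hlive
      obtain ⟨heq, hpc⟩ := ih hlive'
      rw [opCountT_succ, if_pos rfl]
      unfold procStep at hlive ⊢
      split_ifs at hlive ⊢ <;> simp_all
      omega
    · rw [run_proc_of_ne hs] at hlive ⊢
      rw [opCountT_succ, if_neg hs, add_zero]
      exact ih hlive

lemma exists_write_step_of_reg {b : Bool} {r t : ℕ} (hr : 1 ≤ r)
    (hreg : (run input sched t).reg b r = true) :
    ∃ s < t, opCountT sched (sched s) s + 2 = 4 * r := by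
  induction t with
  | zero => simp [run, initConfig] at hreg; omega
  | succ t ih =>
    simp only [run, step_reg, Bool.or_eq_true, decide_eq_true_eq] at hreg
    rcases hreg with hreg | hwrite
    · obtain ⟨s, hs, h⟩ := ih hreg
      exact ⟨s, by omega, h⟩
    · obtain ⟨hlive, hpc, hw⟩ := procStep_snd_eq_some_iff.1 hwrite
      have := (run_round_pc (sched t) t hlive).1
      simp only [Prod.ext_iff] at hw
      exact ⟨t, by omega, by omega⟩

def stepTime (T : Fin N → ℕ → ℝ) (sched : ℕ → Fin N) (t : ℕ) : ℝ :=
  T (sched t) (opCountT sched (sched t) t + 1)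

/-- The state of a process with preference `c` after `j` operations during which it has read
only `0` in the current round and `1` in the previous one. -/
def lockstepState (c : Bool) (j : ℕ) : ProcState := ⟨j % 4, c, j / 4 + 1, false, none⟩

lemma lockstepState_four_mul_add_two (c : Bool) (r : ℕ) :
    lockstepState c (4 * r + 2) = ⟨2, c, r + 1, false, none⟩ := by
  simp only [lockstepState, ProcState.mk.injEq, and_true, true_and]
  omega

lemma procStep_lockstepState {reg : Bool → ℕ → Bool} {c : Bool} {j : ℕ}
    (hcur : j % 4 ≤ 1 → ∀ b, reg b (j / 4 + 1) = false)
    (hprev : j % 4 = 3 → reg (!c) (j / 4) = true) :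
    (procStep reg (lockstepState c j)).1 = lockstepState c (j + 1) := by
  have hj : j % 4 = 0 ∨ j % 4 = 1 ∨ j % 4 = 2 ∨ j % 4 = 3 := by omega
  rcases hj with hj | hj | hj | hj <;>
    simp [procStep, lockstepState, hj, hcur, hprev, Nat.add_mod] <;> omega

section Timing

variable {T : Fin N → ℕ → ℝ} (hC : ConsistentTotal T sched) (hT : ∀ i, Monotone (T i))
include hC hT

lemma stepTime_mono : Monotone (stepTime T sched) := by
  refine monotone_nat_of_le_succ fun t => (hC.1 t (sched (t + 1))).trans (hT _ ?_)
  have := opCountT_mono (sched := sched) (sched (t + 1)) (Nat.le_add_right t 1)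
  omega

lemma run_reg_eq_false_of_stepTime_le (hlate : ∀ i (j : ℕ), (j : ℝ) < T i j) {b : Bool} {r t : ℕ}
    (hr : 1 ≤ r) (ht : stepTime T sched t ≤ 4 * r - 1) : (run input sched t).reg b r = false := by
  by_contra hreg
  obtain ⟨s, hst, hs⟩ := exists_write_step_of_reg hr (Bool.not_eq_false _ ▸ hreg)
  have hwrite : (4 * r - 1 : ℝ) < stepTime T sched s := by
    have hs' : (opCountT sched (sched s) s : ℝ) + 2 = 4 * r := by exact_mod_cast hs
    have := hlate (sched s) (opCountT sched (sched s) s + 1)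
    push_cast at this
    unfold stepTime
    linarith
  linarith [stepTime_mono hC hT hst.le]

lemma run_reg_eq_true_of_lockstep {i : Fin N} {c : Bool} {r t : ℕ}
    (hstate : ∀ t, opCountT sched i t = 4 * r + 2 →
      (run input sched t).proc i = lockstepState c (4 * r + 2))
    (hfast : T i (4 * r + 3) < 4 * r + 4) (ht : 4 * r + 4 ≤ stepTime T sched t) :
    (run input sched t).reg c (r + 1) = true := by
  obtain ⟨t₁, hi, hcount⟩ := hC.2 i (4 * r + 2)
  have hs := hstate t₁ hcount
  rw [lockstepState_four_mul_add_two] at hs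
  have hwrite := run_reg_succ_of_pc_eq_two hi (by rw [hs]) (by rw [hs])
  rw [hs] at hwrite
  have htime : stepTime T sched t₁ = T i (4 * r + 3) := by simp [stepTime, hi, hcount]
  have hlt : stepTime T sched t₁ < stepTime T sched t := by linarith
  exact run_reg_mono ((stepTime_mono hC hT).reflect_lt hlt) hwrite

variable (hlate : ∀ i (j : ℕ), (j : ℝ) < T i j) {R : ℕ} {W : Bool → Fin N}
  (hW : ∀ c, input (W c) = c) (hfast : ∀ c (j : ℕ), j ≤ 4 * R → T (W c) j < j + 1)
include hlate hW hfast

lemma run_proc_eq_lockstepState {j : ℕ} (hj : j ≤ 4 * R) (c : Bool) (t : ℕ)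
    (ht : opCountT sched (W c) t = j) : (run input sched t).proc (W c) = lockstepState c j := by
  induction j using Nat.strong_induction_on generalizing c t with
  | _ j ih =>
  rcases j with _ | j
  · rw [run_proc_eq_of_opCountT_eq (W c) (t' := 0) (by rw [ht]; rfl)]
    simp [run, initConfig, lockstepState, hW]
  obtain ⟨t₀, hi, hcount⟩ := hC.2 (W c) j
  have htime : stepTime T sched t₀ = T (W c) (j + 1) := by simp [stepTime, hi, hcount]
  have hlow : (j + 1 : ℝ) < stepTime T sched t₀ := by rw [htime]; exact_mod_cast hlate _ _
  have hhigh : stepTime T sched t₀ < j + 2 := by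
    rw [htime]; have := hfast c (j + 1) hj; push_cast at this; linarith
  rw [run_proc_eq_of_opCountT_eq (W c) (t' := t₀ + 1) (by simp [opCountT_succ, hi, hcount, ht]),
    ← hi, run_proc_self, hi, ih j (by omega) (by omega) c t₀ hcount]
  refine procStep_lockstepState (fun hpc b => ?_) (fun hpc => ?_)
  · refine run_reg_eq_false_of_stepTime_le hC hT hlate (by omega) ?_
    have : (j : ℝ) + 3 ≤ 4 * ((j / 4 + 1 : ℕ) : ℝ) := by
      have : j + 3 ≤ 4 * (j / 4 + 1) := by omega
      exact_mod_cast this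
    linarith
  · rcases Nat.eq_zero_or_pos (j / 4) with hr | hr
    · rw [hr]; exact run_reg_zero _ _
    · obtain ⟨r, hr⟩ : ∃ r, j / 4 = r + 1 := ⟨j / 4 - 1, by omega⟩
      rw [hr]
      refine run_reg_eq_true_of_lockstep hC hT (i := W !c)
        (ih _ (by omega) (by omega) (!c)) ?_ ?_
      · have := hfast (!c) (4 * r + 3) (by omega); push_cast at this; linarith
      · have : (4 * r + 4 : ℝ) ≤ j + 1 := by
          have : 4 * r + 4 ≤ j + 1 := by omega
          exact_mod_cast this
        linarith

theorem le_firstDecisionRound : (R : ℝ≥0∞) ≤ firstDecisionRound input sched := by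
  refine le_sInf ?_
  rintro _ ⟨q, t, i, rfl, hlive, hdec, hround⟩
  suffices R ≤ q by exact_mod_cast this
  by_contra! hq
  have hi : sched t = i := by
    by_contra hne
    exact hdec (by rwa [run_proc_of_ne hne])
  subst hi
  rw [run_proc_self] at hdec
  obtain ⟨h0, h1, h2, hread⟩ := procStep_decided_ne_none hlive hdec
  obtain ⟨hcount, hpc⟩ := run_round_pc (sched t) t hlive
  rw [hround] at hread hcount
  obtain rfl | ⟨r, rfl⟩ : q = 1 ∨ ∃ r, q = r + 2 := by
    rcases q with _ | _ | r <;> simp_all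
  · simp [run_reg_zero] at hread
  set c := !((run input sched t).proc (sched t)).pref
  have htime : (4 * r + 4 : ℝ) ≤ stepTime T sched t := by
    have hcount' : opCountT sched (sched t) t + 1 = 4 * r + 8 := by omega
    have := hlate (sched t) (opCountT sched (sched t) t + 1)
    rw [hcount'] at this
    push_cast at this
    unfold stepTime
    rw [hcount']
    linarith
  have hwritten := run_reg_eq_true_of_lockstep hC hT (i := W c)
    (run_proc_eq_lockstepState hC hT hlate hW hfast (j := 4 * r + 2) (by omega) c)
    (by have := hfast c (4 * r + 3) (by omega); push_cast at this; linarith) htime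
  simp [hwritten] at hread

end Timing

lemma monotone_sum_Icc {a : ℕ → ℝ} (ha : ∀ k, 1 ≤ k → 0 ≤ a k) :
    Monotone fun j => ∑ k ∈ Icc 1 j, a k := fun _ _ h =>
  sum_le_sum_of_subset_of_nonneg (Icc_subset_Icc_right h) fun k hk _ => ha k (mem_Icc.1 hk).1

lemma le_sum_Icc {a : ℕ → ℝ} (ha : ∀ k, 1 ≤ k → 1 ≤ a k) (j : ℕ) :
    (j : ℝ) ≤ ∑ k ∈ Icc 1 j, a k := by
  simpa using card_nsmul_le_sum (Icc 1 j) a 1 fun k hk => ha k (mem_Icc.1 hk).1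

lemma sum_Icc_eq_of_eq_one {a : ℕ → ℝ} {j : ℕ} (ha : ∀ k < j, a (k + 1) = 1) :
    ∑ k ∈ Icc 1 j, a k = j := by
  induction j with
  | zero => simp
  | succ j ih =>
    rw [sum_Icc_succ_top (by omega), ih fun k hk => ha k (by omega), ha j (by omega)]
    push_cast
    ring

theorem le_firstDecisionRound_of_durations {x : Fin N → ℕ → ℝ} {Δ0 : Fin N → ℝ}
    (hC : ConsistentTotal (fun i j => Δ0 i + ∑ k ∈ Icc 1 j, x i k) sched)
    (hx : ∀ i k, 1 ≤ k → 1 ≤ x i k) (hΔ : ∀ i, 0 < Δ0 i ∧ Δ0 i < 1) {R : ℕ}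
    {W : Bool → Fin N} (hW : ∀ c, input (W c) = c)
    (hunit : ∀ c, ∀ k < 4 * R, x (W c) (k + 1) = 1) :
    (R : ℝ≥0∞) ≤ firstDecisionRound input sched := by
  refine le_firstDecisionRound hC
    (fun i => (monotone_sum_Icc fun k hk => zero_le_one.trans (hx i k hk)).const_add _)
    (fun i j => by linarith [le_sum_Icc (hx i) j, (hΔ i).1]) hW fun c j hj => ?_
  rw [sum_Icc_eq_of_eq_one fun k hk => hunit c k (by omega)]
  linarith [(hΔ (W c)).2]

section Probability

variable {Ω : Type*} [MeasurableSpace Ω] {μ : Measure Ω}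

lemma card_mul_le_measure_biUnion_add {ι : Type*} [DecidableEq ι] {E : ι → Set Ω} {q : ℝ≥0∞}
    (hE : ∀ i, MeasurableSet (E i)) (hq : ∀ i, q ≤ μ (E i))
    (hpair : Pairwise fun i j => μ (E i ∩ E j) ≤ q ^ 2) (s : Finset ι) :
    #s * q ≤ μ (⋃ i ∈ s, E i) + #s ^ 2 * q ^ 2 := by
  induction s using Finset.induction_on with
  | empty => simp
  | insert a s ha ih =>
    have hinter : μ (E a ∩ ⋃ i ∈ s, E i) ≤ #s * q ^ 2 := calc
      _ = μ (⋃ i ∈ s, E a ∩ E i) := by rw [Set.inter_iUnion₂]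
      _ ≤ ∑ i ∈ s, μ (E a ∩ E i) := measure_biUnion_finset_le _ _
      _ ≤ ∑ i ∈ s, q ^ 2 := sum_le_sum fun i hi => hpair (ne_of_mem_of_not_mem hi ha).symm
      _ = #s * q ^ 2 := by simp
    have hsq : (#s : ℝ≥0∞) + #s ^ 2 ≤ (#s + 1) ^ 2 := by
      rw [show ((#s : ℝ≥0∞) + 1) ^ 2 = #s + #s ^ 2 + (#s + 1) by ring]
      exact le_self_add
    calc (#(insert a s) : ℝ≥0∞) * q = q + #s * q := by
          rw [card_insert_of_notMem ha]; push_cast; ring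
      _ ≤ μ (E a) + (μ (⋃ i ∈ s, E i) + #s ^ 2 * q ^ 2) := add_le_add (hq a) ih
      _ = μ (E a ∪ ⋃ i ∈ s, E i) + μ (E a ∩ ⋃ i ∈ s, E i) + #s ^ 2 * q ^ 2 := by
          rw [measure_union_add_inter _ (s.measurableSet_biUnion fun i _ => hE i), add_assoc]
      _ ≤ μ (⋃ i ∈ insert a s, E i) + (#s + #s ^ 2) * q ^ 2 := by
          rw [set_biUnion_insert, add_mul, ← add_assoc]; gcongr
      _ ≤ μ (⋃ i ∈ insert a s, E i) + #(insert a s) ^ 2 * q ^ 2 := by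
          rw [card_insert_of_notMem ha]; push_cast; gcongr

lemma card_mul_div_two_le_measure_iUnion {ι : Type*} [Fintype ι] {E : ι → Set Ω} {q : ℝ≥0∞}
    (hE : ∀ i, MeasurableSet (E i)) (hq : ∀ i, q ≤ μ (E i))
    (hpair : Pairwise fun i j => μ (E i ∩ E j) ≤ q ^ 2) (hsmall : Fintype.card ι * q ≤ 1 / 2) :
    Fintype.card ι * q / 2 ≤ μ (⋃ i, E i) := by
  classical
  set x : ℝ≥0∞ := Fintype.card ι * q
  have hx : x ≤ μ (⋃ i, E i) + x ^ 2 := by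
    simpa [x, mul_pow] using card_mul_le_measure_biUnion_add hE hq hpair univ
  have hsq : x ^ 2 ≤ x / 2 := calc
    x ^ 2 = x * x := sq x
    _ ≤ 1 / 2 * x := by gcongr
    _ = x / 2 := by rw [one_div, ENNReal.div_eq_inv_mul]
  have hxtop : x ≠ ⊤ := ne_top_of_le_ne_top (by norm_num) hsmall
  rw [← ENNReal.sub_half hxtop]
  exact tsub_le_iff_right.2 (hx.trans (by gcongr))

lemma measure_forall_eq_one {ι : Type*} {Y : ι → Ω → ℝ} (hind : iIndepFun Y μ)
    (hfair : ∀ i, μ {ω | Y i ω = 1} = 2⁻¹) (S : Finset ι) :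
    μ {ω | ∀ i ∈ S, Y i ω = 1} = 2⁻¹ ^ #S := by
  have hset : {ω | ∀ i ∈ S, Y i ω = 1} = ⋂ i ∈ S, Y i ⁻¹' {1} := by ext; simp
  rw [hset, hind.meas_biInter fun i _ => ⟨{1}, measurableSet_singleton 1, rfl⟩]
  simp [Set.preimage, hfair]

lemma measurableSet_forall_eq_one {ι : Type*} {Y : ι → Ω → ℝ} (hY : ∀ i, Measurable (Y i))
    (S : Finset ι) : MeasurableSet {ω | ∀ i ∈ S, Y i ω = 1} := by
  have hset : {ω | ∀ i ∈ S, Y i ω = 1} = ⋂ i ∈ S, Y i ⁻¹' {1} := by ext; simp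
  exact hset ▸ S.measurableSet_biInter fun i _ => hY i (measurableSet_singleton 1)

lemma card_mul_div_two_le_measure_exists_forall_eq_one {κ ι : Type*} [Fintype κ]
    {Y : κ × ι → Ω → ℝ} (hY : ∀ p, Measurable (Y p)) (hind : iIndepFun Y μ)
    (hfair : ∀ p, μ {ω | Y p ω = 1} = 2⁻¹) (F : Finset ι)
    (hsmall : 2 * Fintype.card κ ≤ 2 ^ #F) :
    Fintype.card κ * 2⁻¹ ^ #F / 2 ≤ μ (⋃ m, {ω | ∀ i ∈ F, Y (m, i) ω = 1}) := by
  classical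
  have hblock (s : Finset κ) :
      μ (⋂ m ∈ s, {ω | ∀ i ∈ F, Y (m, i) ω = 1}) = 2⁻¹ ^ (#s * #F) := by
    rw [← card_product, ← measure_forall_eq_one hind hfair]
    congr 1; ext; simp only [Set.mem_iInter, Set.mem_ofPred_eq, mem_product]; grind
  refine card_mul_div_two_le_measure_iUnion (fun m => ?_) (fun m => ?_) (fun m m' hmm' => ?_) ?_
  · exact measurableSet_forall_eq_one (fun i => hY (m, i)) F
  · simpa using (hblock {m}).ge
  · have := hblock {m, m'}
    rw [card_pair hmm'] at this
    rw [← pow_mul, mul_comm]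
    simpa [Set.inter_comm] using this.le
  · rw [← ENNReal.inv_pow, ← div_eq_mul_inv, ENNReal.div_le_iff (by simp) (by simp), one_div,
      ← ENNReal.div_eq_inv_mul, ENNReal.le_div_iff_mul_le (by simp) (by simp)]
    exact_mod_cast (by linarith : Fintype.card κ * 2 ≤ 2 ^ #F)

lemma ae_eq_one_or_eq_two [IsProbabilityMeasure μ] {Y : Ω → ℝ} (hY : Measurable Y)
    (h1 : μ {ω | Y ω = 1} = 1 / 2) (h2 : μ {ω | Y ω = 2} = 1 / 2) :
    ∀ᵐ ω ∂μ, Y ω = 1 ∨ Y ω = 2 := by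
  have hmeas (a : ℝ) : MeasurableSet {ω | Y ω = a} := hY (measurableSet_singleton a)
  have hunion : {ω | Y ω = 1 ∨ Y ω = 2} = {ω | Y ω = 1} ∪ {ω | Y ω = 2} := rfl
  have hdisj : Disjoint {ω | Y ω = 1} {ω | Y ω = 2} :=
    Set.disjoint_left.2 fun ω (h1 : Y ω = 1) (h2 : Y ω = 2) => by norm_num [h1] at h2
  rw [ae_iff_measure_eq (hunion ▸ (hmeas 1).union (hmeas 2)).nullMeasurableSet, hunion,
    measure_union hdisj (hmeas 2), h1, h2, ENNReal.add_halves, measure_univ]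

lemma ae_one_le_durations [IsProbabilityMeasure μ] {ι : Type*} [Countable ι]
    {X : ι → ℕ → Ω → ℝ} (hX : ∀ i k, Measurable (X i k))
    (hdist : ∀ i k, 1 ≤ k → μ {ω | X i k ω = 1} = 1 / 2 ∧ μ {ω | X i k ω = 2} = 1 / 2) :
    ∀ᵐ ω ∂μ, ∀ i k, 1 ≤ k → 1 ≤ X i k ω := by
  refine ae_all_iff.2 fun i => ae_all_iff.2 fun k => ?_
  rcases Nat.eq_zero_or_pos k with rfl | hk
  · exact .of_forall fun _ h => absurd h (by norm_num)
  filter_upwards [ae_eq_one_or_eq_two (hX i k) (hdist i k hk).1 (hdist i k hk).2] with ω hω _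
  rcases hω with h | h <;> norm_num [h]

lemma mul_le_lintegral_of_unit_durations {n M L : ℕ} {X : Fin n → ℕ → Ω → ℝ}
    (hX : ∀ i k, Measurable (X i k)) (hind : iIndepFun (fun p : Fin n × ℕ => X p.1 (p.2 + 1)) μ)
    (hfair : ∀ i k, 1 ≤ k → μ {ω | X i k ω = 1} = 1 / 2) {W : Fin M × Bool → Fin n}
    (hW : Function.Injective W) (hL : 2 * M ≤ 2 ^ (2 * L)) {f : Ω → ℝ≥0∞} {R : ℝ≥0∞}
    (hf : ∀ᵐ ω ∂μ, ∀ m, (∀ c, ∀ k < L, X (W (m, c)) (k + 1) ω = 1) → R ≤ f ω) :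
    R * (M * 2⁻¹ ^ (2 * L) / 2) ≤ ∫⁻ ω, f ω ∂μ := by
  let Y (p : Fin M × (Bool × ℕ)) : Ω → ℝ := X (W (p.1, p.2.1)) (p.2.2 + 1)
  let F : Finset (Bool × ℕ) := univ ×ˢ range L
  let U := ⋃ m, {ω | ∀ p ∈ F, Y (m, p) ω = 1}
  have hF : #F = 2 * L := by simp [F]
  have hind' : iIndepFun Y μ := by
    refine hind.precomp (g := fun p : Fin M × (Bool × ℕ) => (W (p.1, p.2.1), p.2.2)) ?_
    rintro ⟨m, c, k⟩ ⟨m', c', k'⟩ h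
    obtain ⟨h1, h2 : k = k'⟩ := Prod.ext_iff.1 h
    obtain ⟨rfl, rfl⟩ := Prod.ext_iff.1 (hW h1)
    rw [h2]
  have hU : M * 2⁻¹ ^ (2 * L) / 2 ≤ μ U := by
    have := card_mul_div_two_le_measure_exists_forall_eq_one (fun _ => hX _ _) hind'
      (fun p => by simpa using hfair _ _ le_add_self) F (by rwa [hF, Fintype.card_fin])
    rwa [hF, Fintype.card_fin] at this
  calc R * (M * 2⁻¹ ^ (2 * L) / 2) ≤ R * μ U := by gcongr
    _ = ∫⁻ ω, U.indicator (fun _ => R) ω ∂μ := (lintegral_indicator_const (MeasurableSet.iUnion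
        fun m => measurableSet_forall_eq_one (fun _ => hX _ _) F) R).symm
    _ ≤ ∫⁻ ω, f ω ∂μ := lintegral_mono_ae <| by
        filter_upwards [hf] with ω hω
        refine Set.indicator_apply_le' (fun hωU => ?_) fun _ => zero_le
        obtain ⟨m, hm⟩ := Set.mem_iUnion.1 hωU
        exact hω m fun c k hk => hm (c, k) (by simp [F, hk])

end Probability

lemma exists_injective_pairs {n : ℕ} {input : Fin n → Bool}
    (hinput : #{i | input i = true} = n / 2) :
    ∃ W : Fin (n / 2) × Bool → Fin n, Function.Injective W ∧ ∀ m c, input (W (m, c)) = c := by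
  have hfalse : #{i | input i = false} + #{i | input i = true} = n := by
    simpa [add_comm] using card_filter_add_card_filter_not (s := univ) fun i => input i = true
  have e (c : Bool) : Fin (n / 2) ↪ {i // input i = c} :=
    (Function.Embedding.nonempty_of_card_le (by
      cases c <;> simp only [Fintype.card_subtype, Fintype.card_fin] <;> omega)).some
  refine ⟨fun p => e p.2 p.1, fun ⟨m, c⟩ ⟨m', c'⟩ h => ?_, fun m c => (e c m).2⟩
  obtain rfl : c = c' := (e c m).2.symm.trans (congrArg input h |>.trans (e c' m').2)
  exact Prod.ext ((e c).injective (Subtype.ext h)) rfl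

lemma exists_two_pow_mem_Ioc {n : ℕ} (hn : n ≠ 0) :
    ∃ R : ℕ, n < 2 ^ (8 * R) ∧ 2 ^ (8 * R) ≤ 256 * n := by
  refine ⟨Nat.log 2 n / 8 + 1, ?_, ?_⟩
  · exact (Nat.lt_pow_succ_log_self one_lt_two n).trans_le
      (Nat.pow_le_pow_right two_pos (by omega))
  · calc 2 ^ (8 * (Nat.log 2 n / 8 + 1)) ≤ 2 ^ (Nat.log 2 n + 8) :=
          Nat.pow_le_pow_right two_pos (by omega)
      _ = 256 * 2 ^ Nat.log 2 n := by ring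
      _ ≤ 256 * n := by gcongr; exact Nat.pow_log_le_self 2 hn

lemma log_le_of_lt_two_pow {n R : ℕ} (hn : n ≠ 0) (h : n < 2 ^ (8 * R)) :
    Real.log n ≤ 6 * R := by
  have hlog : Real.log n ≤ 8 * R * Real.log 2 := by
    rw [← Real.log_rpow two_pos]
    exact Real.log_le_log (by positivity) (by exact_mod_cast h.le)
  nlinarith [Real.log_two_lt_d9]

lemma ofReal_log_le {n R : ℕ} (hn : n ≠ 0) (heven : Even n) (hlow : n < 2 ^ (8 * R))
    (hhigh : 2 ^ (8 * R) ≤ 256 * n) :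
    ENNReal.ofReal (1 / 6144 * Real.log n) ≤ R * ((n / 2 : ℕ) * 2⁻¹ ^ (2 * (4 * R)) / 2) := by
  rw [show 2 * (4 * R) = 8 * R by ring]
  have hlog := log_le_of_lt_two_pow hn hlow
  have hhigh' : (2 : ℝ) ^ (8 * R) ≤ 256 * n := by exact_mod_cast hhigh
  have hhalf : ((n / 2 : ℕ) : ℝ) = n / 2 := by
    rw [Nat.cast_div (even_iff_two_dvd.1 heven) two_ne_zero]; norm_num
  have hR : (0 : ℝ) ≤ R := R.cast_nonneg
  have hP : (0 : ℝ) < 2 ^ (8 * R) := by positivity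
  calc ENNReal.ofReal (1 / 6144 * Real.log n)
      ≤ ENNReal.ofReal (R * ((n / 2 : ℕ) * 2⁻¹ ^ (8 * R) / 2)) := by
        refine ENNReal.ofReal_le_ofReal ?_
        rw [hhalf, inv_pow, ← div_eq_mul_inv, div_div, div_div, mul_div_assoc',
          le_div_iff₀ (by positivity)]
        nlinarith
    _ = R * ((n / 2 : ℕ) * 2⁻¹ ^ (8 * R) / 2) := by
        rw [ENNReal.ofReal_mul hR, ENNReal.ofReal_div_of_pos two_pos,
          ENNReal.ofReal_mul (by positivity), ENNReal.ofReal_pow (by norm_num),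
          ENNReal.ofReal_inv_of_pos two_pos]
        simp

end LeanConsensus

open Finset LeanConsensus in
/-- the `Ω(log n)` lower bound.  There is a noise distribution (each
operation takes `1` or `2` time units with probability `1/2` each, independently) and a
choice of adversary delays (all `Δ i j = 0` for `j ≥ 1`, starting offsets `Δ0 i` distinct
values in `(0,1)`) such that lean-consensus requires expected `Ω(log n)` rounds in the
noisy scheduling model without failures: there is a universal constant `κ > 0` such that
for all sufficiently large even `n`, if `n/2` processes start with input `0` and `n/2`
with input `1`, then in executions scheduled consistently with the random operation
times `Δ0 i + ∑_{k=1}^j X i k`, the expected round at which the first process decides is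
at least `κ log n`. -/
theorem lean_consensus_lower_bound :
    ∃ κ : ℝ, 0 < κ ∧ ∃ n₀ : ℕ, ∀ n : ℕ, n₀ ≤ n → Even n →
      ∀ (Ω : Type) (_ : MeasurableSpace Ω) (μ : Measure Ω), IsProbabilityMeasure μ →
      ∀ (X : Fin n → ℕ → Ω → ℝ) (Δ0 : Fin n → ℝ) (input : Fin n → Bool)
        (sched : Ω → ℕ → Fin n),
      (∀ i j, Measurable (X i j)) →
      iIndepFun (fun p : Fin n × ℕ => X p.1 (p.2 + 1)) μ →
      (∀ (i : Fin n) (k : ℕ), 1 ≤ k →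
        μ {ω | X i k ω = 1} = 1 / 2 ∧ μ {ω | X i k ω = 2} = 1 / 2) →
      Function.Injective Δ0 →
      (∀ i, 0 < Δ0 i ∧ Δ0 i < 1) →
      ((Finset.univ.filter fun i => input i = true).card = n / 2) →
      (∀ ω, ConsistentTotal
        (fun i j => Δ0 i + ∑ k ∈ Finset.Icc 1 j, X i k ω) (sched ω)) →
      ENNReal.ofReal (κ * Real.log n) ≤
        ∫⁻ ω, firstDecisionRound input (sched ω) ∂μ := by
  refine ⟨1 / 6144, by norm_num, 1, fun n hn heven Ω _ μ _ X Δ0 input sched hX hind hdist _ hΔ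
    hinput hcons => ?_⟩
  obtain ⟨R, hlow, hhigh⟩ := exists_two_pow_mem_Ioc (n := n) (by omega)
  obtain ⟨W, hWinj, hW⟩ := exists_injective_pairs hinput
  calc ENNReal.ofReal (1 / 6144 * Real.log n)
      ≤ R * ((n / 2 : ℕ) * 2⁻¹ ^ (2 * (4 * R)) / 2) := ofReal_log_le (by omega) heven hlow hhigh
    _ ≤ ∫⁻ ω, firstDecisionRound input (sched ω) ∂μ := by
      refine mul_le_lintegral_of_unit_durations hX hind (fun i k hk => (hdist i k hk).1) hWinj
        (by rw [show 2 * (4 * R) = 8 * R by ring]; omega) ?_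
      filter_upwards [ae_one_le_durations hX hdist] with ω hx m hunit
      exact le_firstDecisionRound_of_durations (hcons ω) hx hΔ (hW m) hunit
end
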